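/- arXiv:1809.09873 — 3 statements merged into one kernel-verified Lean document; each statement's English description precedes it below -/
import Mathlib

section
/- (Lemma 1) Suppose I = {(1),...,(n)} is a selection maximizing expected social welfare V* = ∑_{i=1}^n ( v_{(i)} − γ_{(i)} ∑_{w=0}^{i−1} p_w ) over all subsets of LSEs. Then for any LSE j ∉ I, v_j − γ_j p_0 ≤ ∑_{w=1}^{n} min(γ_j, γ_{(w)}) p_w ≤ γ_j ∑_{w=1}^{n} p_w. -/
open Finset

/-- Rank of LSE `i` in selection `S`: number of members `j ∈ S` with `γ j ≥ γ i`
(so the member with largest `γ` has rank 1). -/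
noncomputable def rnk {ι : Type*} [DecidableEq ι] (γ : ι → ℝ) (S : Finset ι) (i : ι) : ℕ :=
  (S.filter (fun j => γ i ≤ γ j)).card

/-- Expected social welfare of a selection `S`: each member contributes
`v i − γ i * ∑_{w=0}^{rank−1} p w`. -/
noncomputable def welfare {ι : Type*} [DecidableEq ι] (p : ℕ → ℝ) (v γ : ι → ℝ)
    (S : Finset ι) : ℝ :=
  ∑ i ∈ S, (v i - γ i * ∑ w ∈ Finset.range (rnk γ S i), p w)

lemma rnk_pos {ι : Type*} [DecidableEq ι] (γ : ι → ℝ) {S : Finset ι} {i : ι} (hi : i ∈ S) :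
    1 ≤ rnk γ S i :=
  Finset.card_pos.mpr ⟨i, Finset.mem_filter.mpr ⟨hi, le_refl _⟩⟩

lemma rnk_le {ι : Type*} [DecidableEq ι] (γ : ι → ℝ) (S : Finset ι) (i : ι) :
    rnk γ S i ≤ S.card :=
  Finset.card_le_card (Finset.filter_subset _ _)

lemma rnk_injOn {ι : Type*} [DecidableEq ι] {γ : ι → ℝ} (hγ : Function.Injective γ)
    (S : Finset ι) : Set.InjOn (rnk γ S) S := by
  have key : ∀ a ∈ S, ∀ b ∈ S, γ a < γ b → rnk γ S b < rnk γ S a := by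
    intro a ha b hb h
    apply Finset.card_lt_card
    constructor
    · intro t ht
      rcases Finset.mem_filter.mp ht with ⟨ht1, ht2⟩
      exact Finset.mem_filter.mpr ⟨ht1, le_trans h.le ht2⟩
    · intro hc
      have := hc (Finset.mem_filter.mpr ⟨ha, le_refl _⟩)
      exact absurd (Finset.mem_filter.mp this).2 (not_le.mpr h)
  intro a ha b hb hab
  by_contra hne
  have hgne : γ a ≠ γ b := fun h => hne (hγ h)
  rcases lt_or_gt_of_ne hgne with h | h
  · exact absurd hab.symm (Nat.ne_of_lt (key a ha b hb h))
  · exact absurd hab (Nat.ne_of_lt (key b hb a ha h))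

lemma rnk_image {ι : Type*} [DecidableEq ι] {γ : ι → ℝ} (hγ : Function.Injective γ)
    (S : Finset ι) : S.image (rnk γ S) = Finset.Icc 1 S.card := by
  apply Finset.eq_of_subset_of_card_le
  · intro w hw
    obtain ⟨i, hi, rfl⟩ := Finset.mem_image.mp hw
    exact Finset.mem_Icc.mpr ⟨rnk_pos γ hi, rnk_le γ S i⟩
  · rw [Nat.card_Icc, Finset.card_image_of_injOn (rnk_injOn hγ S)]
    omega

lemma sum_rnk {ι : Type*} [DecidableEq ι] {γ : ι → ℝ} (hγ : Function.Injective γ)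
    (S : Finset ι) (f : ℕ → ℝ) :
    ∑ i ∈ S, f (rnk γ S i) = ∑ w ∈ Finset.Icc 1 S.card, f w := by
  rw [← rnk_image hγ S,
    Finset.sum_image (fun a ha b hb h => rnk_injOn hγ S ha hb h)]

lemma rnk_image_filter {ι : Type*} [DecidableEq ι] {γ : ι → ℝ} (hγ : Function.Injective γ)
    (I : Finset ι) (c : ℝ) :
    (I.filter (fun i => c < γ i)).image (rnk γ I)
      = Finset.Icc 1 (I.filter (fun i => c < γ i)).card := by
  apply Finset.eq_of_subset_of_card_le
  · intro w hw
    obtain ⟨i, hi, rfl⟩ := Finset.mem_image.mp hw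
    rcases Finset.mem_filter.mp hi with ⟨hiI, hci⟩
    refine Finset.mem_Icc.mpr ⟨rnk_pos γ hiI, ?_⟩
    apply Finset.card_le_card
    intro t ht
    rcases Finset.mem_filter.mp ht with ⟨ht1, ht2⟩
    exact Finset.mem_filter.mpr ⟨ht1, lt_of_lt_of_le hci ht2⟩
  · rw [Nat.card_Icc,
      Finset.card_image_of_injOn ((rnk_injOn hγ I).mono (fun x hx =>
        (Finset.filter_subset _ I) hx))]
    omega

lemma sum_rnk_filter {ι : Type*} [DecidableEq ι] {γ : ι → ℝ} (hγ : Function.Injective γ)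
    (I : Finset ι) (c : ℝ) (f : ℕ → ℝ) :
    ∑ i ∈ I.filter (fun i => c < γ i), f (rnk γ I i)
      = ∑ w ∈ Finset.Icc 1 (I.filter (fun i => c < γ i)).card, f w := by
  rw [← rnk_image_filter hγ I c,
    Finset.sum_image (fun a ha b hb h =>
      rnk_injOn hγ I ((Finset.filter_subset _ I) ha) ((Finset.filter_subset _ I) hb) h)]

/-- Lemma 1: If `I` maximizes expected social welfare over all selections,
then for every LSE `j ∉ I` (writing `γ_(w)` for the rank-`w` member of `I`):
`v j − γ j * p 0 ≤ ∑_{w=1}^{n} min(γ j, γ_(w)) p w ≤ γ j * ∑_{w=1}^{n} p w`,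
the middle sum being expressed as a sum over the members of `I` indexed by their ranks. -/
theorem stmt4 {ι : Type*} [Fintype ι] [DecidableEq ι] (p : ℕ → ℝ) (v γ : ι → ℝ) (wbar : ℕ)
    (hv : ∀ i, 0 < v i) (hγpos : ∀ i, 0 < γ i) (hγinj : Function.Injective γ)
    (hp : ∀ w, 0 ≤ p w) (hsum : ∑ w ∈ Finset.range (wbar + 1), p w = 1)
    (hpz : ∀ w, wbar < w → p w = 0)
    (I : Finset ι) (hopt : ∀ S : Finset ι, welfare p v γ S ≤ welfare p v γ I)
    (j : ι) (hj : j ∉ I) :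
    v j - γ j * p 0 ≤ ∑ i ∈ I, min (γ j) (γ i) * p (rnk γ I i) ∧
    ∑ i ∈ I, min (γ j) (γ i) * p (rnk γ I i) ≤ γ j * ∑ w ∈ Finset.Icc 1 I.card, p w := by
  classical
  set T := I.filter (fun i => γ j < γ i) with hT
  set D := I.filter (fun i => γ i < γ j) with hD
  set m := T.card with hm
  have hne : ∀ i ∈ I, γ i ≠ γ j := fun i hi h => hj ((hγinj h) ▸ hi)
  -- rank of j after insertion
  have hfc : I.filter (fun t => γ j ≤ γ t) = T := by
    apply Finset.filter_congr
    intro i hi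
    exact ⟨fun h => lt_of_le_of_ne h (fun e => hne i hi e.symm), le_of_lt⟩
  have hrj : rnk γ (insert j I) j = m + 1 := by
    unfold rnk
    rw [Finset.filter_insert, if_pos le_rfl,
      Finset.card_insert_of_notMem (fun h => hj (Finset.mem_filter.mp h).1), hfc]
  -- rank of members after insertion
  have hri : ∀ i ∈ I, rnk γ (insert j I) i
      = rnk γ I i + (if γ i < γ j then 1 else 0) := by
    intro i hi
    unfold rnk
    rw [Finset.filter_insert]
    by_cases h : γ i < γ j
    · rw [if_pos h.le, if_pos h,
        Finset.card_insert_of_notMem (fun hc => hj (Finset.mem_filter.mp hc).1)]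
    · have hnle : ¬ γ i ≤ γ j := fun hle => h (lt_of_le_of_ne hle (hne i hi))
      rw [if_neg hnle, if_neg h, add_zero]
  -- welfare identity
  have hwI' : welfare p v γ (insert j I)
      = welfare p v γ I + (v j - γ j * ∑ w ∈ Finset.range (m + 1), p w
        - ∑ i ∈ D, γ i * p (rnk γ I i)) := by
    unfold welfare
    rw [Finset.sum_insert hj, hrj]
    have hterm : ∀ i ∈ I, (v i - γ i * ∑ w ∈ Finset.range (rnk γ (insert j I) i), p w)
        = (v i - γ i * ∑ w ∈ Finset.range (rnk γ I i), p w)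
          - (if γ i < γ j then γ i * p (rnk γ I i) else 0) := by
      intro i hi
      rw [hri i hi]
      by_cases h : γ i < γ j
      · rw [if_pos h, if_pos h, Finset.sum_range_succ]; ring
      · rw [if_neg h, if_neg h]; ring
    rw [Finset.sum_congr rfl hterm, Finset.sum_sub_distrib, ← Finset.sum_filter]
    ring
  have hkey : v j ≤ γ j * ∑ w ∈ Finset.range (m + 1), p w
      + ∑ i ∈ D, γ i * p (rnk γ I i) := by
    have h := hopt (insert j I)
    rw [hwI'] at h
    linarith
  -- split the min-sum
  have hsplit : ∑ i ∈ I, min (γ j) (γ i) * p (rnk γ I i)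
      = γ j * (∑ w ∈ Finset.Icc 1 m, p w) + ∑ i ∈ D, γ i * p (rnk γ I i) := by
    rw [← Finset.sum_filter_add_sum_filter_not I (fun i => γ j < γ i)]
    congr 1
    · have h1 : ∀ i ∈ T, min (γ j) (γ i) * p (rnk γ I i) = γ j * p (rnk γ I i) := by
        intro i hi
        rw [min_eq_left (le_of_lt (Finset.mem_filter.mp hi).2)]
      rw [Finset.sum_congr rfl h1, ← Finset.mul_sum, hm, sum_rnk_filter hγinj I (γ j)]
    · have hfc2 : I.filter (fun i => ¬ γ j < γ i) = D := by
        apply Finset.filter_congr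
        intro i hi
        exact ⟨fun h => lt_of_le_of_ne (not_lt.mp h) (hne i hi),
          fun h => not_lt.mpr h.le⟩
      rw [hfc2]
      apply Finset.sum_congr rfl
      intro i hi
      rw [min_eq_right (le_of_lt (Finset.mem_filter.mp hi).2)]
  have hr : ∑ w ∈ Finset.range (m + 1), p w = p 0 + ∑ w ∈ Finset.Icc 1 m, p w := by
    rw [Finset.range_eq_Ico, Finset.sum_eq_sum_Ico_succ_bot (Nat.succ_pos m)]
    congr 1
  constructor
  · rw [hsplit]
    rw [hr, mul_add] at hkey
    linarith
  · calc ∑ i ∈ I, min (γ j) (γ i) * p (rnk γ I i)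
        ≤ ∑ i ∈ I, γ j * p (rnk γ I i) :=
          Finset.sum_le_sum (fun i _ =>
            mul_le_mul_of_nonneg_right (min_le_left _ _) (hp _))
      _ = γ j * ∑ w ∈ Finset.Icc 1 I.card, p w := by
          rw [← Finset.mul_sum, sum_rnk hγinj]
end

section
/- (Exchange inequality) Let I be an expected-welfare-optimal selection of size n with ranking γ_{(1)} > ... > γ_{(n)}. Then for every rank i ≤ n and every LSE j ∉ I, v_j − γ_j ∑_{w=0}^{i−1} p_w ≤ v_{(i)} − γ_{(i)} ∑_{w=0}^{i−1} p_w. -/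
open Finset

lemma rnk_strict_anti {ι : Type*} [DecidableEq ι] (γ : ι → ℝ) (S : Finset ι) {k l : ι}
    (hk : k ∈ S) (h : γ k < γ l) : rnk γ S l < rnk γ S k := by
  apply Finset.card_lt_card
  constructor
  · intro m hm
    rw [Finset.mem_filter] at *
    exact ⟨hm.1, le_trans h.le hm.2⟩
  · intro hsub
    have := hsub (Finset.mem_filter.2 ⟨hk, le_refl _⟩)
    exact absurd (Finset.mem_filter.1 this).2 (not_le.2 h)

lemma rnk_mem {ι : Type*} [DecidableEq ι] (γ : ι → ℝ) (S : Finset ι) {k : ι} (hk : k ∈ S) :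
    rnk γ S k ∈ Finset.Icc 1 S.card := by
  rw [Finset.mem_Icc]
  constructor
  · exact Finset.card_pos.2 ⟨k, Finset.mem_filter.2 ⟨hk, le_refl _⟩⟩
  · exact Finset.card_le_card (Finset.filter_subset _ _)

/-- Exchange inequality: If `I` is an expected-welfare-optimal selection,
then for every member `i ∈ I` (of rank `rnk γ I i`) and every LSE `j ∉ I`,
`v j − γ j ∑_{w=0}^{rank−1} p w ≤ v i − γ i ∑_{w=0}^{rank−1} p w`. -/
theorem stmt6 {ι : Type*} [Fintype ι] [DecidableEq ι] (p : ℕ → ℝ) (v γ : ι → ℝ) (wbar : ℕ)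
    (hv : ∀ i, 0 < v i) (hγpos : ∀ i, 0 < γ i) (hγinj : Function.Injective γ)
    (hp : ∀ w, 0 ≤ p w) (hsum : ∑ w ∈ Finset.range (wbar + 1), p w = 1)
    (hpz : ∀ w, wbar < w → p w = 0)
    (I : Finset ι) (hopt : ∀ S : Finset ι, welfare p v γ S ≤ welfare p v γ I) :
    ∀ i ∈ I, ∀ j ∉ I,
      v j - γ j * ∑ w ∈ Finset.range (rnk γ I i), p w
        ≤ v i - γ i * ∑ w ∈ Finset.range (rnk γ I i), p w := by
  intro i hi j hj
  classical
  set S : Finset ι := insert j (I.erase i) with hS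
  have hjS : j ∈ S := Finset.mem_insert_self _ _
  have hij : i ≠ j := fun h => hj (h ▸ hi)
  have hjE : j ∉ I.erase i := fun h => hj (Finset.mem_of_mem_erase h)
  have hIpos : 0 < I.card := Finset.card_pos.2 ⟨i, hi⟩
  have hcard : S.card = I.card := by
    rw [hS, Finset.card_insert_of_notMem hjE, Finset.card_erase_of_mem hi]
    omega
  set ρ : ι → ℕ := fun k => if k = j then rnk γ I i else rnk γ I k with hρ
  have hmemS : ∀ k ∈ S, k ≠ j → k ∈ I.erase i := by
    intro k hk hkj
    rcases Finset.mem_insert.1 hk with h' | h'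
    · exact absurd h' hkj
    · exact h'
  have hρinj : Set.InjOn ρ S := by
    intro k hk l hl h
    by_cases hkj : k = j <;> by_cases hlj : l = j
    · rw [hkj, hlj]
    · exfalso
      simp only [hρ, hkj, if_pos rfl, if_neg hlj] at h
      have hlI := hmemS l hl hlj
      have := rnk_injOn hγinj I hi (Finset.mem_of_mem_erase hlI) h
      exact (Finset.mem_erase.1 hlI).1 this.symm
    · exfalso
      simp only [hρ, hlj, if_pos rfl, if_neg hkj] at h
      have hkI := hmemS k hk hkj
      have := rnk_injOn hγinj I (Finset.mem_of_mem_erase hkI) hi h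
      exact (Finset.mem_erase.1 hkI).1 this
    · simp only [hρ, if_neg hkj, if_neg hlj] at h
      exact rnk_injOn hγinj I (Finset.mem_of_mem_erase (hmemS k hk hkj))
        (Finset.mem_of_mem_erase (hmemS l hl hlj)) h
  have hρmem : ∀ k ∈ S, ρ k ∈ Finset.Icc 1 S.card := by
    intro k hk
    rw [hcard]
    by_cases hkj : k = j
    · simp only [hρ, hkj, if_pos rfl]
      exact rnk_mem γ I hi
    · simp only [hρ, if_neg hkj]
      exact rnk_mem γ I (Finset.mem_of_mem_erase (hmemS k hk hkj))
  have hFmem : ∀ k ∈ S, rnk γ S k ∈ Finset.Icc 1 S.card := fun k hk => rnk_mem γ S hk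
  -- build σ0 : ↥S ≃ ↥S with rnk γ S (σ0 k) = ρ k
  set T : Finset ℕ := Finset.Icc 1 S.card with hT
  set F1 : ↥S → ↥T := fun k => ⟨rnk γ S k.1, hFmem k.1 k.2⟩ with hF1
  set F2 : ↥S → ↥T := fun k => ⟨ρ k.1, hρmem k.1 k.2⟩ with hF2
  have hF1inj : Function.Injective F1 := fun a b h =>
    Subtype.ext (rnk_injOn hγinj S a.2 b.2 (congrArg Subtype.val h))
  have hF2inj : Function.Injective F2 := fun a b h =>
    Subtype.ext (hρinj a.2 b.2 (congrArg Subtype.val h))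
  have hcardeq : Fintype.card ↥S = Fintype.card ↥T := by
    simp [hT, Nat.card_Icc]
  have hF1bij : Function.Bijective F1 :=
    (Fintype.bijective_iff_injective_and_card F1).2 ⟨hF1inj, hcardeq⟩
  have hF2bij : Function.Bijective F2 :=
    (Fintype.bijective_iff_injective_and_card F2).2 ⟨hF2inj, hcardeq⟩
  set e1 := Equiv.ofBijective F1 hF1bij with he1
  set e2 := Equiv.ofBijective F2 hF2bij with he2
  set σ0 : Equiv.Perm ↥S := e2.trans e1.symm with hσ0
  set σ : Equiv.Perm ι := Equiv.Perm.ofSubtype σ0 with hσdef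
  have hσF : ∀ k ∈ S, rnk γ S (σ k) = ρ k := by
    intro k hk
    have hmem : σ k = (σ0 ⟨k, hk⟩ : ↥S).1 := Equiv.Perm.ofSubtype_apply_of_mem σ0 hk
    rw [hmem]
    have h1 : F1 (σ0 ⟨k, hk⟩) = F2 ⟨k, hk⟩ := by
      show F1 (e1.symm (e2 ⟨k, hk⟩)) = F2 ⟨k, hk⟩
      exact e1.apply_symm_apply (e2 ⟨k, hk⟩)
    exact congrArg Subtype.val h1
  have hσsupp : {x | σ x ≠ x} ⊆ (S : Set ι) := by
    intro x hx
    by_contra hxS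
    exact hx (Equiv.Perm.ofSubtype_apply_of_not_mem σ0 hxS)
  -- rearrangement inequality: the canonical ranking minimizes the cost term
  have hanti : AntivaryOn γ (fun k => ∑ w ∈ Finset.range (rnk γ S k), p w) (S : Set ι) := by
    intro k hk l hl h
    by_contra hlt
    push_neg at hlt
    have hrk := rnk_strict_anti γ S (Finset.mem_coe.1 hk) hlt
    have : (∑ w ∈ Finset.range (rnk γ S l), p w) ≤ ∑ w ∈ Finset.range (rnk γ S k), p w :=
      Finset.sum_le_sum_of_subset_of_nonneg (Finset.range_subset_range.2 hrk.le) (fun w _ _ => hp w)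
    exact absurd h (not_lt.2 this)
  have hrearr := hanti.sum_smul_le_sum_smul_comp_perm hσsupp
  simp only [smul_eq_mul] at hrearr
  have hrearr2 : ∑ k ∈ S, γ k * (∑ w ∈ Finset.range (rnk γ S k), p w)
      ≤ ∑ k ∈ S, γ k * (∑ w ∈ Finset.range (ρ k), p w) := by
    refine hrearr.trans_eq (Finset.sum_congr rfl fun k hk => ?_)
    rw [hσF k hk]
  have hwS : ∑ k ∈ S, (v k - γ k * ∑ w ∈ Finset.range (ρ k), p w) ≤ welfare p v γ S := by
    simp only [welfare]
    rw [Finset.sum_sub_distrib, Finset.sum_sub_distrib]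
    exact sub_le_sub_left hrearr2 _
  have hsplit : ∑ k ∈ S, (v k - γ k * ∑ w ∈ Finset.range (ρ k), p w)
      = welfare p v γ I - (v i - γ i * ∑ w ∈ Finset.range (rnk γ I i), p w)
        + (v j - γ j * ∑ w ∈ Finset.range (rnk γ I i), p w) := by
    rw [hS, Finset.sum_insert hjE]
    have h1 : ∀ k ∈ I.erase i,
        (v k - γ k * ∑ w ∈ Finset.range (ρ k), p w)
          = (v k - γ k * ∑ w ∈ Finset.range (rnk γ I k), p w) := by
      intro k hk
      have hkj : k ≠ j := fun h => hj (h ▸ Finset.mem_of_mem_erase hk)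
      simp [hρ, hkj]
    rw [Finset.sum_congr rfl h1]
    have h2 : ∑ k ∈ I.erase i, (v k - γ k * ∑ w ∈ Finset.range (rnk γ I k), p w)
        = welfare p v γ I - (v i - γ i * ∑ w ∈ Finset.range (rnk γ I i), p w) := by
      simp only [welfare]
      rw [← Finset.sum_erase_add I _ hi]
      ring
    rw [h2]
    simp only [hρ, if_pos rfl]
    ring
  have hfin := hwS.trans (hopt S)
  rw [hsplit] at hfin
  linarith
end

section
/- (Lemma 2) Let I be the optimal selection of size n with ranks γ_{(1)} > ... > γ_{(n)}, fix a member (i), and for each j ∉ I define θ^i_j = v_j − γ_j p_0 − ∑_{w=1}^{i−1} p_w min(γ_{(w)}, γ_j) − ∑_{w=i}^{n−1} p_w min(γ_{(w+1)}, γ_j). Let j(i) = argmax_{j∉I} θ^i_j and θ̄^i = θ^i_{j(i)}. Then the expected-welfare-optimal selection subject to excluding (i) is I \ {(i)} if θ̄^i ≤ 0, and I \ {(i)} ∪ {j(i)} if θ̄^i > 0. -/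
open Finset

/-- `θ^i_j`: expected welfare contribution of outside LSE `j` when added to `I \ {(i)}`,
where `e k` is the rank-`k` member of `I`. -/
noncomputable def theta {ι : Type*} (p : ℕ → ℝ) (v γ : ι → ℝ) (e : ℕ → ι) (n i : ℕ)
    (j : ι) : ℝ :=
  v j - γ j * p 0 - (∑ w ∈ Finset.Icc 1 (i - 1), p w * min (γ (e w)) (γ j))
    - (∑ w ∈ Finset.Icc i (n - 1), p w * min (γ (e (w + 1))) (γ j))

/-! ### Auxiliary definitions -/

/-- Number of elements of `S` with `γ` value strictly above `t`. -/
noncomputable def Nc {ι : Type*} [DecidableEq ι] (γ : ι → ℝ) (S : Finset ι) (t : ℝ) : ℕ :=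
  (S.filter (fun z => t < γ z)).card

/-- The `w`-th largest `γ` value in `S` (or `0` if `S` has fewer than `w` elements). -/
noncomputable def tau {ι : Type*} [DecidableEq ι] (γ : ι → ℝ) (w : ℕ) (S : Finset ι) : ℝ :=
  (insert (0:ℝ) ((S.filter (fun z => w ≤ rnk γ S z)).image γ)).max'
    (Finset.insert_nonempty _ _)

/-- `∫_0^c q_{N_S(t)} dt`, the expected-cost integral of a selection. -/
noncomputable def CC {ι : Type*} [DecidableEq ι] (p : ℕ → ℝ) (γ : ι → ℝ) (wbar : ℕ)
    (S : Finset ι) (c : ℝ) : ℝ :=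
  c * p 0 + ∑ w ∈ Finset.Icc 1 wbar, p w * min c (tau γ w S)

section Aux

variable {ι : Type*} [DecidableEq ι] {p : ℕ → ℝ} {v γ : ι → ℝ}

lemma rnk_le_card (γ : ι → ℝ) (S : Finset ι) (z : ι) : rnk γ S z ≤ S.card :=
  Finset.card_filter_le _ _

lemma one_le_rnk {S : Finset ι} {z : ι} (hz : z ∈ S) : 1 ≤ rnk γ S z :=
  Finset.card_pos.mpr ⟨z, Finset.mem_filter.mpr ⟨hz, le_rfl⟩⟩

lemma rnk_lt_rnk {S : Finset ι} {z z' : ι} (hz : z ∈ S) (h : γ z < γ z') :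
    rnk γ S z' < rnk γ S z := by
  have hsub : S.filter (fun j => γ z' ≤ γ j) ⊆ S.filter (fun j => γ z ≤ γ j) := by
    intro j hj
    rw [Finset.mem_filter] at hj ⊢
    exact ⟨hj.1, le_trans h.le hj.2⟩
  have h1 : z ∈ S.filter (fun j => γ z ≤ γ j) := Finset.mem_filter.mpr ⟨hz, le_rfl⟩
  have h2 : z ∉ S.filter (fun j => γ z' ≤ γ j) := by
    simp only [Finset.mem_filter, not_and]
    intro _
    exact not_le.mpr h
  exact Finset.card_lt_card ((Finset.ssubset_iff_of_subset hsub).mpr ⟨z, h1, h2⟩)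

lemma rnk_injOn_s7 (hinj : Function.Injective γ) {S : Finset ι} {z z' : ι}
    (hz : z ∈ S) (hz' : z' ∈ S) (h : rnk γ S z = rnk γ S z') : z = z' := by
  rcases lt_trichotomy (γ z) (γ z') with hl | he | hl
  · exact absurd h (by have := rnk_lt_rnk hz hl; omega)
  · exact hinj he
  · exact absurd h (by have := rnk_lt_rnk hz' hl; omega)

lemma tau_nonneg (γ : ι → ℝ) (w : ℕ) (S : Finset ι) : 0 ≤ tau γ w S :=
  Finset.le_max' _ _ (Finset.mem_insert_self _ _)

lemma le_tau {S : Finset ι} {z : ι} {w : ℕ} (hz : z ∈ S) (hw : w ≤ rnk γ S z) :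
    γ z ≤ tau γ w S :=
  Finset.le_max' _ _ (Finset.mem_insert_of_mem
    (Finset.mem_image_of_mem γ (Finset.mem_filter.mpr ⟨hz, hw⟩)))

lemma tau_le {S : Finset ι} {w : ℕ} {c : ℝ} (hc : 0 ≤ c)
    (h : ∀ z ∈ S, w ≤ rnk γ S z → γ z ≤ c) : tau γ w S ≤ c := by
  apply Finset.max'_le
  intro x hx
  rcases Finset.mem_insert.mp hx with rfl | hx
  · exact hc
  · obtain ⟨z, hz, rfl⟩ := Finset.mem_image.mp hx
    obtain ⟨hzS, hzw⟩ := Finset.mem_filter.mp hz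
    exact h z hzS hzw

lemma tau_rnk (hpos : ∀ x, 0 < γ x) (hinj : Function.Injective γ) {S : Finset ι} {z : ι}
    (hz : z ∈ S) : tau γ (rnk γ S z) S = γ z := by
  refine le_antisymm (tau_le (hpos z).le ?_) (le_tau hz le_rfl)
  intro z' hz' hw
  by_contra hlt
  push_neg at hlt
  exact absurd hw (by have := rnk_lt_rnk hz hlt; omega)

lemma tau_eq_zero {S : Finset ι} {w : ℕ} (h : S.card < w) : tau γ w S = 0 :=
  le_antisymm
    (tau_le le_rfl (fun z hz hw => absurd hw (by have := rnk_le_card γ S z; omega)))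
    (tau_nonneg γ w S)

lemma char1 {S : Finset ι} {w : ℕ} {t : ℝ} (hw : 1 ≤ w) (ht : 0 ≤ t)
    (h : t < tau γ w S) : w ≤ Nc γ S t := by
  have hmem := Finset.max'_mem
    (insert (0:ℝ) ((S.filter (fun z => w ≤ rnk γ S z)).image γ)) (Finset.insert_nonempty _ _)
  rcases Finset.mem_insert.mp hmem with h0 | himg
  · exfalso
    rw [tau, h0] at h
    exact absurd h (not_lt.mpr ht)
  · obtain ⟨z, hzf, hzeq⟩ := Finset.mem_image.mp himg
    obtain ⟨hzS, hzw⟩ := Finset.mem_filter.mp hzf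
    have htz : t < γ z := by rw [tau, ← hzeq] at h; exact h
    refine le_trans hzw ?_
    apply Finset.card_le_card
    intro y hy
    obtain ⟨hyS, hyγ⟩ := Finset.mem_filter.mp hy
    exact Finset.mem_filter.mpr ⟨hyS, lt_of_lt_of_le htz hyγ⟩

lemma char2 {S : Finset ι} {w : ℕ} {t : ℝ} (hw : 1 ≤ w) (h : w ≤ Nc γ S t) :
    t < tau γ w S := by
  have hne : (S.filter (fun z => t < γ z)).Nonempty := by
    apply Finset.card_pos.mp
    have : (0:ℕ) < w := hw
    exact lt_of_lt_of_le this h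
  obtain ⟨z, hzmem, hzmin⟩ := Finset.exists_min_image _ γ hne
  obtain ⟨hzS, htz⟩ := Finset.mem_filter.mp hzmem
  refine lt_of_lt_of_le htz (le_tau hzS ?_)
  refine le_trans h ?_
  apply Finset.card_le_card
  intro y hy
  exact Finset.mem_filter.mpr ⟨(Finset.mem_filter.mp hy).1, hzmin y hy⟩

lemma min_interval {a b τS τA : ℝ} (ha : 0 ≤ a) (hab : a ≤ b)
    (H : ∀ t, a < t → t < b → t < τS → t < τA) :
    min b τS - min a τS ≤ min b τA - min a τA := by
  rcases le_or_gt τS a with h | h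
  · have h1 : min b τS = τS := min_eq_right (h.trans hab)
    have h2 : min a τS = τS := min_eq_right h
    have h3 : min a τA ≤ min b τA := min_le_min hab le_rfl
    linarith
  · rcases eq_or_lt_of_le hab with rfl | hab'
    · simp
    · have hm : a < min b τS := lt_min hab' h
      have hm2 : min a τS = a := min_eq_left h.le
      have hτAm : min b τS ≤ τA := by
        by_contra hcon
        push_neg at hcon
        have h4 : max a τA < min b τS := max_lt hm hcon
        set t := (max a τA + min b τS) / 2 with htdef
        have h5 : max a τA < t := by rw [htdef]; linarith
        have h6 : t < min b τS := by rw [htdef]; linarith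
        have h7 := H t (lt_of_le_of_lt (le_max_left a τA) h5)
          (lt_of_lt_of_le h6 (min_le_left _ _)) (lt_of_lt_of_le h6 (min_le_right _ _))
        exact absurd h7 (not_lt.mpr (le_trans (le_max_right a τA) h5.le))
      have h8 : min b τS ≤ min b τA := le_min (min_le_left _ _) hτAm
      have h9 : min a τA ≤ a := min_le_left _ _
      linarith

lemma CC_zero (p : ℕ → ℝ) (γ : ι → ℝ) (wbar : ℕ) (S : Finset ι) : CC p γ wbar S 0 = 0 := by
  simp only [CC, zero_mul, zero_add]
  apply Finset.sum_eq_zero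
  intro w _
  rw [min_eq_left (tau_nonneg γ w S), mul_zero]

lemma CC_interval {wbar : ℕ} (hp : ∀ w, 0 ≤ p w) {S T : Finset ι} {a b : ℝ}
    (ha : 0 ≤ a) (hab : a ≤ b) (H : ∀ t, a < t → t < b → Nc γ S t ≤ Nc γ T t) :
    CC p γ wbar S b - CC p γ wbar S a ≤ CC p γ wbar T b - CC p γ wbar T a := by
  simp only [CC]
  have key : ∀ w ∈ Finset.Icc 1 wbar,
      p w * min b (tau γ w S) - p w * min a (tau γ w S)
      ≤ p w * min b (tau γ w T) - p w * min a (tau γ w T) := by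
    intro w hw
    have hw1 : 1 ≤ w := (Finset.mem_Icc.mp hw).1
    rw [← mul_sub, ← mul_sub]
    refine mul_le_mul_of_nonneg_left ?_ (hp w)
    refine min_interval ha hab ?_
    intro t h1 h2 h3
    exact char2 hw1 (le_trans (char1 hw1 (ha.trans h1.le) h3) (H t h1 h2))
  have hs := Finset.sum_le_sum key
  have d1 := Finset.sum_sub_distrib (s := Finset.Icc 1 wbar)
    (f := fun w => p w * min b (tau γ w S)) (g := fun w => p w * min a (tau γ w S))
  have d2 := Finset.sum_sub_distrib (s := Finset.Icc 1 wbar)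
    (f := fun w => p w * min b (tau γ w T)) (g := fun w => p w * min a (tau γ w T))
  linarith

lemma CC_eq (hpos : ∀ x, 0 < γ x) (hinj : Function.Injective γ) {wbar : ℕ}
    (hpz : ∀ w, wbar < w → p w = 0) {S : Finset ι} {x : ι} (hx : x ∉ S) :
    CC p γ wbar S (γ x)
      = γ x * (∑ w ∈ Finset.range (Nc γ S (γ x) + 1), p w)
        + ∑ z ∈ S.filter (fun z => γ z < γ x), γ z * p (rnk γ S z) := by
  set ν := Nc γ S (γ x) with hν
  have hrnk_le : ∀ z ∈ S, γ x < γ z → rnk γ S z ≤ ν := by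
    intro z hz hlt
    apply Finset.card_le_card
    intro y hy
    obtain ⟨hyS, hyγ⟩ := Finset.mem_filter.mp hy
    exact Finset.mem_filter.mpr ⟨hyS, lt_of_lt_of_le hlt hyγ⟩
  have hmin1 : ∀ w ∈ (Finset.Icc 1 wbar).filter (fun w => ¬ ν < w),
      min (γ x) (tau γ w S) = γ x := by
    intro w hw
    obtain ⟨hw2, hw3⟩ := Finset.mem_filter.mp hw
    have hw1 : 1 ≤ w := (Finset.mem_Icc.mp hw2).1
    have : γ x < tau γ w S := char2 hw1 (by omega)
    exact min_eq_left this.le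
  have hmin2 : ∀ w ∈ (Finset.Icc 1 wbar).filter (fun w => ν < w),
      min (γ x) (tau γ w S) = tau γ w S := by
    intro w hw
    obtain ⟨hw2, hw3⟩ := Finset.mem_filter.mp hw
    refine min_eq_right (tau_le (hpos x).le ?_)
    intro z hz hwz
    rcases lt_trichotomy (γ z) (γ x) with h | h | h
    · exact h.le
    · exact absurd (hinj h) (by rintro rfl; exact hx hz)
    · exact absurd hwz (by have := hrnk_le z hz h; omega)
  rw [CC, ← Finset.sum_filter_add_sum_filter_not (Finset.Icc 1 wbar) (fun w => ν < w)]
  have e1 : ∑ w ∈ (Finset.Icc 1 wbar).filter (fun w => ¬ ν < w), p w * min (γ x) (tau γ w S)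
      = (∑ w ∈ (Finset.Icc 1 wbar).filter (fun w => ¬ ν < w), p w) * γ x := by
    rw [Finset.sum_mul]
    refine Finset.sum_congr rfl ?_
    intro w hw
    rw [hmin1 w hw]
  have e2 : (Finset.Icc 1 wbar).filter (fun w => ¬ ν < w) = Finset.Icc 1 (min wbar ν) := by
    ext w
    simp only [Finset.mem_filter, Finset.mem_Icc, not_lt, le_min_iff]
    omega
  have e3 : γ x * p 0 + (∑ w ∈ Finset.Icc 1 (min wbar ν), p w) * γ x
      = γ x * ∑ w ∈ Finset.range (ν + 1), p w := by
    have h4 : ∑ w ∈ Finset.Icc 1 (min wbar ν), p w = ∑ w ∈ Finset.Icc 1 ν, p w := by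
      refine Finset.sum_subset (Finset.Icc_subset_Icc le_rfl (min_le_right _ _)) ?_
      intro w hw hnw
      refine hpz w ?_
      simp only [Finset.mem_Icc] at hw hnw
      omega
    have h5 : Finset.range (ν + 1) = insert 0 (Finset.Icc 1 ν) := by
      ext w
      simp only [Finset.mem_range, Finset.mem_insert, Finset.mem_Icc]
      omega
    rw [h4, h5, Finset.sum_insert (by simp)]
    ring
  have e4 : ∑ w ∈ (Finset.Icc 1 wbar).filter (fun w => ν < w), p w * min (γ x) (tau γ w S)
      = ∑ z ∈ S.filter (fun z => γ z < γ x), γ z * p (rnk γ S z) := by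
    rw [Finset.sum_congr rfl (fun w hw => by rw [hmin2 w hw])]
    set M := max wbar S.card with hM
    have s1 : ∑ w ∈ (Finset.Icc 1 wbar).filter (fun w => ν < w), p w * tau γ w S
        = ∑ w ∈ (Finset.Icc 1 M).filter (fun w => ν < w), p w * tau γ w S := by
      refine Finset.sum_subset ?_ ?_
      · intro w hw
        simp only [Finset.mem_filter, Finset.mem_Icc] at hw ⊢
        exact ⟨⟨hw.1.1, le_trans hw.1.2 (le_max_left _ _)⟩, hw.2⟩
      · intro w hw hnw
        have hwb : wbar < w := by
          simp only [Finset.mem_filter, Finset.mem_Icc] at hw hnw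
          omega
        rw [hpz w hwb, zero_mul]
    have s2 : ∑ w ∈ (Finset.Icc 1 S.card).filter (fun w => ν < w), p w * tau γ w S
        = ∑ w ∈ (Finset.Icc 1 M).filter (fun w => ν < w), p w * tau γ w S := by
      refine Finset.sum_subset ?_ ?_
      · intro w hw
        simp only [Finset.mem_filter, Finset.mem_Icc] at hw ⊢
        exact ⟨⟨hw.1.1, le_trans hw.1.2 (le_max_right _ _)⟩, hw.2⟩
      · intro w hw hnw
        have hcw : S.card < w := by
          simp only [Finset.mem_filter, Finset.mem_Icc] at hw hnw
          omega
        rw [tau_eq_zero hcw, mul_zero]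
    rw [s1, ← s2]
    refine (Finset.sum_bij (i := fun z _ => rnk γ S z) ?_ ?_ ?_ ?_).symm
    · intro z hz
      obtain ⟨hzS, hzx⟩ := Finset.mem_filter.mp hz
      refine Finset.mem_filter.mpr ⟨Finset.mem_Icc.mpr ⟨one_le_rnk hzS, rnk_le_card γ S z⟩, ?_⟩
      have hsub : insert z (S.filter (fun y => γ x < γ y)) ⊆ S.filter (fun y => γ z ≤ γ y) := by
        intro y hy
        rcases Finset.mem_insert.mp hy with rfl | hy
        · exact Finset.mem_filter.mpr ⟨hzS, le_rfl⟩
        · obtain ⟨hyS, hyγ⟩ := Finset.mem_filter.mp hy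
          exact Finset.mem_filter.mpr ⟨hyS, (lt_trans hzx hyγ).le⟩
      have hznot : z ∉ S.filter (fun y => γ x < γ y) := by
        simp only [Finset.mem_filter, not_and]
        intro _
        exact not_lt.mpr hzx.le
      have hcard := Finset.card_le_card hsub
      rw [Finset.card_insert_of_notMem hznot] at hcard
      show ν < rnk γ S z
      have hν' : ν = (S.filter (fun y => γ x < γ y)).card := rfl
      have hr : rnk γ S z = (S.filter (fun y => γ z ≤ γ y)).card := rfl
      omega
    · intro z hz z' hz' hzz
      exact rnk_injOn_s7 hinj (Finset.mem_of_mem_filter _ hz) (Finset.mem_of_mem_filter _ hz') hzz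
    · intro w hw
      obtain ⟨hw2, hw3⟩ := Finset.mem_filter.mp hw
      have himg : S.image (fun z => rnk γ S z) = Finset.Icc 1 S.card := by
        refine Finset.eq_of_subset_of_card_le ?_ ?_
        · intro r hr
          obtain ⟨z, hz, rfl⟩ := Finset.mem_image.mp hr
          exact Finset.mem_Icc.mpr ⟨one_le_rnk hz, rnk_le_card γ S z⟩
        · rw [Nat.card_Icc,
            Finset.card_image_of_injOn (fun z hz z' hz' h => rnk_injOn_s7 hinj hz hz' h)]
          omega
      have hwI : w ∈ S.image (fun z => rnk γ S z) := by rw [himg]; exact hw2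
      obtain ⟨z, hzS, hzw⟩ := Finset.mem_image.mp hwI
      refine ⟨z, ?_, hzw⟩
      refine Finset.mem_filter.mpr ⟨hzS, ?_⟩
      rcases lt_trichotomy (γ z) (γ x) with h | h | h
      · exact h
      · exact absurd (hinj h) (by rintro rfl; exact hx hzS)
      · exfalso
        have := hrnk_le z hzS h
        omega
    · intro z hz
      obtain ⟨hzS, _⟩ := Finset.mem_filter.mp hz
      show γ z * p (rnk γ S z) = p (rnk γ S z) * tau γ (rnk γ S z) S
      rw [tau_rnk hpos hinj hzS]
      ring
  rw [e4, e1, e2]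
  linarith [e3]

lemma welfare_insert (hpos : ∀ x, 0 < γ x) (hinj : Function.Injective γ) {wbar : ℕ}
    (hpz : ∀ w, wbar < w → p w = 0) {S : Finset ι} {x : ι} (hx : x ∉ S) :
    welfare p v γ (insert x S) = welfare p v γ S + v x - CC p γ wbar S (γ x) := by
  have hrx : rnk γ (insert x S) x = Nc γ S (γ x) + 1 := by
    rw [rnk, Finset.filter_insert, if_pos le_rfl,
      Finset.card_insert_of_notMem (fun h => hx (Finset.mem_of_mem_filter _ h))]
    congr 1
    have hfe : S.filter (fun j => γ x ≤ γ j) = S.filter (fun j => γ x < γ j) := by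
      refine Finset.filter_congr ?_
      intro j hj
      constructor
      · intro h
        exact lt_of_le_of_ne h (fun he => hx (by rw [hinj he]; exact hj))
      · exact le_of_lt
    rw [hfe]
    rfl
  have hr1 : ∀ z ∈ S, γ z < γ x → rnk γ (insert x S) z = rnk γ S z + 1 := by
    intro z hz h
    rw [rnk, Finset.filter_insert, if_pos h.le,
      Finset.card_insert_of_notMem (fun hc => hx (Finset.mem_of_mem_filter _ hc))]
    rfl
  have hr2 : ∀ z ∈ S, ¬ (γ z < γ x) → rnk γ (insert x S) z = rnk γ S z := by
    intro z hz h
    have hne : γ x ≠ γ z := fun he => hx (by rw [hinj he]; exact hz)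
    have hlt : γ x < γ z := lt_of_le_of_ne (not_lt.mp h) hne
    rw [rnk, Finset.filter_insert, if_neg (not_le.mpr hlt)]
    rfl
  simp only [welfare]
  rw [Finset.sum_insert hx, hrx]
  have hsplit : ∑ z ∈ S, (v z - γ z * ∑ w ∈ Finset.range (rnk γ (insert x S) z), p w)
      = (∑ z ∈ S, (v z - γ z * ∑ w ∈ Finset.range (rnk γ S z), p w))
        - ∑ z ∈ S.filter (fun z => γ z < γ x), γ z * p (rnk γ S z) := by
    rw [← Finset.sum_filter_add_sum_filter_not S (fun z => γ z < γ x)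
        (fun z => v z - γ z * ∑ w ∈ Finset.range (rnk γ (insert x S) z), p w),
      ← Finset.sum_filter_add_sum_filter_not S (fun z => γ z < γ x)
        (fun z => v z - γ z * ∑ w ∈ Finset.range (rnk γ S z), p w)]
    have c1 : ∑ z ∈ S.filter (fun z => γ z < γ x),
        (v z - γ z * ∑ w ∈ Finset.range (rnk γ (insert x S) z), p w)
        = ∑ z ∈ S.filter (fun z => γ z < γ x),
          ((v z - γ z * ∑ w ∈ Finset.range (rnk γ S z), p w) - γ z * p (rnk γ S z)) := by
      refine Finset.sum_congr rfl ?_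
      intro z hz
      obtain ⟨hzS, hzγ⟩ := Finset.mem_filter.mp hz
      rw [hr1 z hzS hzγ, Finset.sum_range_succ]
      ring
    have c2 : ∑ z ∈ S.filter (fun z => ¬ γ z < γ x),
        (v z - γ z * ∑ w ∈ Finset.range (rnk γ (insert x S) z), p w)
        = ∑ z ∈ S.filter (fun z => ¬ γ z < γ x),
          (v z - γ z * ∑ w ∈ Finset.range (rnk γ S z), p w) := by
      refine Finset.sum_congr rfl ?_
      intro z hz
      obtain ⟨hzS, hzγ⟩ := Finset.mem_filter.mp hz
      rw [hr2 z hzS hzγ]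
    rw [c1, c2, Finset.sum_sub_distrib]
    ring
  rw [hsplit, CC_eq hpos hinj hpz hx]
  ring

lemma cross (γ : ι → ℝ) (S A : Finset ι) {c : ℝ} (hc : ∀ z ∈ S, γ z ≠ c) :
    ∀ t0 : ℝ, 0 < t0 → t0 < c → Nc γ A t0 < Nc γ S t0 →
    ∃ y, y ∈ S ∧ y ∉ A ∧
      ((γ y < c ∧ ∀ t, γ y < t → t < c → Nc γ S t ≤ Nc γ A t) ∨
       (c < γ y ∧ ∀ t, c < t → t < γ y → Nc γ A t < Nc γ S t)) := by
  suffices H : ∀ m : ℕ, ∀ t0 : ℝ, ((S ∪ A).filter (fun z => t0 < γ z)).card ≤ m →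
      0 < t0 → t0 < c → Nc γ A t0 < Nc γ S t0 →
      ∃ y, y ∈ S ∧ y ∉ A ∧
        ((γ y < c ∧ ∀ t, γ y < t → t < c → Nc γ S t ≤ Nc γ A t) ∨
         (c < γ y ∧ ∀ t, c < t → t < γ y → Nc γ A t < Nc γ S t)) by
    exact fun t0 h1 h2 h3 => H _ t0 le_rfl h1 h2 h3
  intro m
  induction m with
  | zero =>
    intro t0 hm h1 h2 h3
    exfalso
    have hle : Nc γ S t0 ≤ ((S ∪ A).filter (fun z => t0 < γ z)).card := by
      apply Finset.card_le_card
      intro y hy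
      obtain ⟨hyS, hyt⟩ := Finset.mem_filter.mp hy
      exact Finset.mem_filter.mpr ⟨Finset.mem_union_left _ hyS, hyt⟩
    omega
  | succ m ih =>
    intro t0 hm h1 h2 h3
    have hU : ((S \ A).filter (fun z => t0 < γ z)).Nonempty := by
      rw [Finset.nonempty_iff_ne_empty]
      intro hemp
      have hsub : S.filter (fun z => t0 < γ z) ⊆ A.filter (fun z => t0 < γ z) := by
        intro y hy
        obtain ⟨hyS, hyt⟩ := Finset.mem_filter.mp hy
        by_cases hyA : y ∈ A
        · exact Finset.mem_filter.mpr ⟨hyA, hyt⟩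
        · exact absurd (Finset.mem_filter.mpr ⟨Finset.mem_sdiff.mpr ⟨hyS, hyA⟩, hyt⟩)
            (by rw [hemp]; exact Finset.notMem_empty y)
      have := Finset.card_le_card hsub
      have h3' : (A.filter (fun z => t0 < γ z)).card < (S.filter (fun z => t0 < γ z)).card := h3
      omega
    obtain ⟨y, hyU, hymin⟩ := Finset.exists_min_image _ γ hU
    obtain ⟨hySA, hyt⟩ := Finset.mem_filter.mp hyU
    obtain ⟨hyS, hyA⟩ := Finset.mem_sdiff.mp hySA
    have hkey : ∀ t, t0 ≤ t → t < γ y → Nc γ A t < Nc γ S t := by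
      intro t htt0 hty
      have dS : (S.filter (fun z => t0 < γ z)).card
          = ((S.filter (fun z => t0 < γ z)) ∩ A).card
            + ((S.filter (fun z => t0 < γ z)) \ A).card :=
        (Finset.card_inter_add_card_sdiff _ _).symm
      have dA : (A.filter (fun z => t0 < γ z)).card
          = ((A.filter (fun z => t0 < γ z)) ∩ S).card
            + ((A.filter (fun z => t0 < γ z)) \ S).card :=
        (Finset.card_inter_add_card_sdiff _ _).symm
      have dSt : (S.filter (fun z => t < γ z)).card
          = ((S.filter (fun z => t < γ z)) ∩ A).card
            + ((S.filter (fun z => t < γ z)) \ A).card :=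
        (Finset.card_inter_add_card_sdiff _ _).symm
      have dAt : (A.filter (fun z => t < γ z)).card
          = ((A.filter (fun z => t < γ z)) ∩ S).card
            + ((A.filter (fun z => t < γ z)) \ S).card :=
        (Finset.card_inter_add_card_sdiff _ _).symm
      have hIeq0 : ((S.filter (fun z => t0 < γ z)) ∩ A).card
          = ((A.filter (fun z => t0 < γ z)) ∩ S).card := by
        congr 1
        ext z
        simp only [Finset.mem_inter, Finset.mem_filter]
        tauto
      have hIeqt : ((S.filter (fun z => t < γ z)) ∩ A).card
          = ((A.filter (fun z => t < γ z)) ∩ S).card := by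
        congr 1
        ext z
        simp only [Finset.mem_inter, Finset.mem_filter]
        tauto
      have hSd : (S.filter (fun z => t < γ z)) \ A = (S.filter (fun z => t0 < γ z)) \ A := by
        ext z
        simp only [Finset.mem_sdiff, Finset.mem_filter]
        constructor
        · rintro ⟨⟨hzS, hzt⟩, hzA⟩
          exact ⟨⟨hzS, lt_of_le_of_lt htt0 hzt⟩, hzA⟩
        · rintro ⟨⟨hzS, hzt0⟩, hzA⟩
          refine ⟨⟨hzS, ?_⟩, hzA⟩
          have hzU : z ∈ (S \ A).filter (fun z => t0 < γ z) :=
            Finset.mem_filter.mpr ⟨Finset.mem_sdiff.mpr ⟨hzS, hzA⟩, hzt0⟩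
          exact lt_of_lt_of_le hty (hymin z hzU)
      have hAd : ((A.filter (fun z => t < γ z)) \ S).card
          ≤ ((A.filter (fun z => t0 < γ z)) \ S).card := by
        apply Finset.card_le_card
        intro z hz
        simp only [Finset.mem_sdiff, Finset.mem_filter] at hz ⊢
        exact ⟨⟨hz.1.1, lt_of_le_of_lt htt0 hz.1.2⟩, hz.2⟩
      have h3' : (A.filter (fun z => t0 < γ z)).card < (S.filter (fun z => t0 < γ z)).card := h3
      have hgoal : (A.filter (fun z => t < γ z)).card < (S.filter (fun z => t < γ z)).card := by
        have hSdc : ((S.filter (fun z => t < γ z)) \ A).card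
            = ((S.filter (fun z => t0 < γ z)) \ A).card := by rw [hSd]
        omega
      exact hgoal
    rcases lt_trichotomy (γ y) c with hlt | heq | hgt
    · by_cases hB : ∃ t1, γ y < t1 ∧ t1 < c ∧ Nc γ A t1 < Nc γ S t1
      · obtain ⟨t1, ht1, ht1c, hN1⟩ := hB
        refine ih t1 ?_ (lt_trans (lt_trans h1 hyt) ht1) ht1c hN1
        have hsub : (S ∪ A).filter (fun z => t1 < γ z) ⊆ (S ∪ A).filter (fun z => t0 < γ z) := by
          intro z hz
          obtain ⟨hz1, hz2⟩ := Finset.mem_filter.mp hz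
          exact Finset.mem_filter.mpr ⟨hz1, lt_trans (lt_trans hyt ht1) hz2⟩
        have hy1 : y ∈ (S ∪ A).filter (fun z => t0 < γ z) :=
          Finset.mem_filter.mpr ⟨Finset.mem_union_left _ hyS, hyt⟩
        have hy2 : y ∉ (S ∪ A).filter (fun z => t1 < γ z) := by
          simp only [Finset.mem_filter, not_and]
          intro _
          exact not_lt.mpr ht1.le
        have := Finset.card_lt_card ((Finset.ssubset_iff_of_subset hsub).mpr ⟨y, hy1, hy2⟩)
        omega
      · push_neg at hB
        exact ⟨y, hyS, hyA, Or.inl ⟨hlt, fun t ht1 ht2 => hB t ht1 ht2⟩⟩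
    · exact absurd heq (hc y hyS)
    · exact ⟨y, hyS, hyA, Or.inr ⟨hgt, fun t ht1 ht2 => hkey t (lt_trans h2 ht1).le ht2⟩⟩

end Aux

/-- Lemma 2: Let `I` be the optimal selection of size `n` with ranking
`e : {1,...,n} → I` (so `γ (e 1) > ... > γ (e n)`), fix a member `e i`, and let
`j0 = j(i)` maximize `θ^i_j` over `j ∉ I`, with `θ̄^i = θ^i_{j0}`. Then the
expected-welfare-optimal selection subject to excluding `e i` is `I \ {e i}` if
`θ̄^i ≤ 0`, and `I \ {e i} ∪ {j0}` if `θ̄^i > 0`. -/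
theorem stmt7 {ι : Type*} [Fintype ι] [DecidableEq ι] (p : ℕ → ℝ) (v γ : ι → ℝ) (wbar : ℕ)
    (hv : ∀ i, 0 < v i) (hγpos : ∀ i, 0 < γ i) (hγinj : Function.Injective γ)
    (hp : ∀ w, 0 ≤ p w) (hsum : ∑ w ∈ Finset.range (wbar + 1), p w = 1)
    (hpz : ∀ w, wbar < w → p w = 0)
    (I : Finset ι) (n : ℕ) (e : ℕ → ι)
    (hn : I.card = n)
    (hIm : I = (Finset.Icc 1 n).image e)
    (hrank : ∀ k ∈ Finset.Icc 1 n, rnk γ I (e k) = k)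
    (hopt : ∀ S : Finset ι, welfare p v γ S ≤ welfare p v γ I)
    (i : ℕ) (hi : i ∈ Finset.Icc 1 n)
    (j0 : ι) (hj0 : j0 ∉ I)
    (hmax : ∀ j ∉ I, theta p v γ e n i j ≤ theta p v γ e n i j0) :
    (theta p v γ e n i j0 ≤ 0 →
      ∀ S : Finset ι, e i ∉ S → welfare p v γ S ≤ welfare p v γ (I.erase (e i))) ∧
    (0 < theta p v γ e n i j0 →
      ∀ S : Finset ι, e i ∉ S →
        welfare p v γ S ≤ welfare p v γ (insert j0 (I.erase (e i)))) := by
  obtain ⟨hi1, hin⟩ := Finset.mem_Icc.mp hi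
  have heI : ∀ k ∈ Finset.Icc 1 n, e k ∈ I := by
    intro k hk
    rw [hIm]
    exact Finset.mem_image_of_mem e hk
  have heiI : e i ∈ I := heI i hi
  set A := I.erase (e i) with hA
  have heiA : e i ∉ A := Finset.notMem_erase _ _
  have hins : insert (e i) A = I := Finset.insert_erase heiI
  have hAI : A ⊆ I := Finset.erase_subset _ _
  have einj : ∀ k ∈ Finset.Icc 1 n, ∀ l ∈ Finset.Icc 1 n, e k = e l → k = l := by
    intro k hk l hl he
    rw [← hrank k hk, ← hrank l hl, he]
  have hord : ∀ k ∈ Finset.Icc 1 n, ∀ l ∈ Finset.Icc 1 n, k < l → γ (e l) < γ (e k) := by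
    intro k hk l hl hkl
    rcases lt_trichotomy (γ (e l)) (γ (e k)) with h | h | h
    · exact h
    · exact absurd (einj l hl k hk (hγinj h)) (by omega)
    · exfalso
      have := rnk_lt_rnk (heI k hk) h
      rw [hrank k hk, hrank l hl] at this
      omega
  have hrnkA : ∀ k ∈ Finset.Icc 1 n, k ≠ i → rnk γ A (e k) = if k < i then k else k - 1 := by
    intro k hk hki
    have hfe : A.filter (fun z => γ (e k) ≤ γ z)
        = (I.filter (fun z => γ (e k) ≤ γ z)).erase (e i) := by
      rw [hA, Finset.filter_erase]
    rw [rnk, hfe]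
    by_cases hik : k < i
    · have hnotm : e i ∉ I.filter (fun z => γ (e k) ≤ γ z) := by
        simp only [Finset.mem_filter, not_and]
        intro _
        exact not_le.mpr (hord k hk i hi hik)
      rw [Finset.erase_eq_of_notMem hnotm, if_pos hik]
      exact hrank k hk
    · have hik' : i < k := by omega
      have hm : e i ∈ I.filter (fun z => γ (e k) ≤ γ z) :=
        Finset.mem_filter.mpr ⟨heiI, (hord i hi k hk hik').le⟩
      rw [Finset.card_erase_of_mem hm, if_neg hik]
      have : (I.filter (fun z => γ (e k) ≤ γ z)).card = rnk γ I (e k) := rfl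
      rw [this, hrank k hk]
  have hAcard : A.card = n - 1 := by
    rw [hA, Finset.card_erase_of_mem heiI, hn]
  have htau1 : ∀ w, 1 ≤ w → w ≤ i - 1 → tau γ w A = γ (e w) := by
    intro w h1 h2
    have hw : w ∈ Finset.Icc 1 n := Finset.mem_Icc.mpr ⟨h1, by omega⟩
    have hwi : w ≠ i := by omega
    have hmem : e w ∈ A :=
      Finset.mem_erase.mpr ⟨fun he => hwi (einj w hw i hi he), heI w hw⟩
    have ht := tau_rnk hγpos hγinj hmem
    rw [hrnkA w hw hwi, if_pos (by omega)] at ht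
    exact ht
  have htau2 : ∀ w, i ≤ w → w ≤ n - 1 → tau γ w A = γ (e (w + 1)) := by
    intro w h1 h2
    have hw : w + 1 ∈ Finset.Icc 1 n := Finset.mem_Icc.mpr ⟨by omega, by omega⟩
    have hwi : w + 1 ≠ i := by omega
    have hmem : e (w + 1) ∈ A :=
      Finset.mem_erase.mpr ⟨fun he => hwi (einj _ hw i hi he), heI _ hw⟩
    have ht := tau_rnk hγpos hγinj hmem
    rw [hrnkA _ hw hwi, if_neg (by omega)] at ht
    simpa using ht
  have htau3 : ∀ w, n ≤ w → tau γ w A = 0 := by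
    intro w hw
    exact tau_eq_zero (by omega)
  have theta_eq : ∀ j : ι, theta p v γ e n i j = v j - CC p γ wbar A (γ j) := by
    intro j
    have key : ∑ w ∈ Finset.Icc 1 wbar, p w * min (γ j) (tau γ w A)
        = (∑ w ∈ Finset.Icc 1 (i - 1), p w * min (γ (e w)) (γ j))
          + ∑ w ∈ Finset.Icc i (n - 1), p w * min (γ (e (w + 1))) (γ j) := by
      set M := wbar + n with hM
      set f : ℕ → ℝ := fun w => p w * min (γ j) (tau γ w A) with hf
      have s1 : ∑ w ∈ Finset.Icc 1 wbar, f w = ∑ w ∈ Finset.Icc 1 M, f w := by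
        refine Finset.sum_subset (Finset.Icc_subset_Icc le_rfl (by omega)) ?_
        intro w hw hnw
        have : wbar < w := by
          simp only [Finset.mem_Icc] at hw hnw
          omega
        rw [hf]
        simp only
        rw [hpz w this, zero_mul]
      have icc_ioc : ∀ a b : ℕ, Finset.Icc (a + 1) b = Finset.Ioc a b := by
        intro a b
        ext w
        simp only [Finset.mem_Icc, Finset.mem_Ioc]
        omega
      have t1 : (∑ w ∈ Finset.Ioc 0 (i - 1), f w) + (∑ w ∈ Finset.Ioc (i - 1) (n - 1), f w)
          = ∑ w ∈ Finset.Ioc 0 (n - 1), f w :=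
        Finset.sum_Ioc_consecutive _ (by omega) (by omega)
      have t2 : (∑ w ∈ Finset.Ioc 0 (n - 1), f w) + (∑ w ∈ Finset.Ioc (n - 1) M, f w)
          = ∑ w ∈ Finset.Ioc 0 M, f w :=
        Finset.sum_Ioc_consecutive _ (by omega) (by omega)
      have e1 : Finset.Icc 1 M = Finset.Ioc 0 M := icc_ioc 0 M
      have e2 : Finset.Icc 1 (i - 1) = Finset.Ioc 0 (i - 1) := icc_ioc 0 (i - 1)
      have e3 : Finset.Icc i (n - 1) = Finset.Ioc (i - 1) (n - 1) := by
        rw [← icc_ioc]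
        congr 1
        omega
      have P1 : ∑ w ∈ Finset.Icc 1 (i - 1), f w
          = ∑ w ∈ Finset.Icc 1 (i - 1), p w * min (γ (e w)) (γ j) := by
        refine Finset.sum_congr rfl ?_
        intro w hw
        obtain ⟨hw1, hw2⟩ := Finset.mem_Icc.mp hw
        rw [hf]
        simp only
        rw [htau1 w hw1 hw2, min_comm]
      have P2 : ∑ w ∈ Finset.Icc i (n - 1), f w
          = ∑ w ∈ Finset.Icc i (n - 1), p w * min (γ (e (w + 1))) (γ j) := by
        refine Finset.sum_congr rfl ?_
        intro w hw
        obtain ⟨hw1, hw2⟩ := Finset.mem_Icc.mp hw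
        rw [hf]
        simp only
        rw [htau2 w hw1 hw2, min_comm]
      have P3 : ∑ w ∈ Finset.Ioc (n - 1) M, f w = 0 := by
        refine Finset.sum_eq_zero ?_
        intro w hw
        obtain ⟨hw1, hw2⟩ := Finset.mem_Ioc.mp hw
        rw [hf]
        simp only
        rw [htau3 w (by omega), min_eq_right (hγpos j).le, mul_zero]
      calc ∑ w ∈ Finset.Icc 1 wbar, f w
          = ∑ w ∈ Finset.Icc 1 M, f w := s1
        _ = ∑ w ∈ Finset.Ioc 0 M, f w := by rw [e1]
        _ = (∑ w ∈ Finset.Ioc 0 (n - 1), f w) + ∑ w ∈ Finset.Ioc (n - 1) M, f w := t2.symm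
        _ = (∑ w ∈ Finset.Ioc 0 (i - 1), f w) + (∑ w ∈ Finset.Ioc (i - 1) (n - 1), f w)
              + ∑ w ∈ Finset.Ioc (n - 1) M, f w := by rw [t1]
        _ = (∑ w ∈ Finset.Icc 1 (i - 1), f w) + (∑ w ∈ Finset.Icc i (n - 1), f w) + 0 := by
              rw [e2, e3, P3]
        _ = (∑ w ∈ Finset.Icc 1 (i - 1), p w * min (γ (e w)) (γ j))
              + ∑ w ∈ Finset.Icc i (n - 1), p w * min (γ (e (w + 1))) (γ j) := by
              rw [P1, P2]; ring
    rw [theta, CC, key]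
    ring
  have hfI : welfare p v γ I = welfare p v γ A + v (e i) - CC p γ wbar A (γ (e i)) := by
    rw [← hins]
    exact welfare_insert hγpos hγinj hpz heiA
  have main : ∀ S : Finset ι, e i ∉ S →
      welfare p v γ S ≤ welfare p v γ A ∨
      ∃ y, y ∉ I ∧ welfare p v γ S ≤ welfare p v γ A + (v y - CC p γ wbar A (γ y)) := by
    intro S hS
    by_cases hbl : ∃ t, 0 < t ∧ t < γ (e i) ∧ Nc γ A t < Nc γ S t
    · right
      obtain ⟨t0, ht0, ht0c, hN0⟩ := hbl
      have hc : ∀ z ∈ S, γ z ≠ γ (e i) := by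
        intro z hz he
        exact hS (by rw [← hγinj he]; exact hz)
      obtain ⟨y, hyS, hyA, hcase⟩ := cross γ S A hc t0 ht0 ht0c hN0
      have hyI : y ∉ I := by
        rw [← hins]
        intro hmem
        rcases Finset.mem_insert.mp hmem with he | hmem
        · exact hS (he ▸ hyS)
        · exact hyA hmem
      refine ⟨y, hyI, ?_⟩
      set S' := S.erase y with hS'
      have hyS' : y ∉ S' := Finset.notMem_erase _ _
      have hSS' : insert y S' = S := Finset.insert_erase hyS
      have heiS' : e i ∉ S' := fun h => hS (Finset.erase_subset _ _ h)
      have h1 : welfare p v γ S = welfare p v γ S' + v y - CC p γ wbar S' (γ y) := by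
        rw [← hSS']
        exact welfare_insert hγpos hγinj hpz hyS'
      have h2 : welfare p v γ (insert (e i) S')
          = welfare p v γ S' + v (e i) - CC p γ wbar S' (γ (e i)) :=
        welfare_insert hγpos hγinj hpz heiS'
      have h3 : welfare p v γ (insert (e i) S') ≤ welfare p v γ I := hopt _
      have hK : CC p γ wbar S' (γ (e i)) - CC p γ wbar S' (γ y)
          ≤ CC p γ wbar A (γ (e i)) - CC p γ wbar A (γ y) := by
        rcases hcase with ⟨hlt, hdom⟩ | ⟨hgt, hdom⟩
        · refine CC_interval hp (hγpos y).le hlt.le ?_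
          intro t ha hb
          refine le_trans (Finset.card_le_card ?_) (hdom t ha hb)
          intro z hz
          obtain ⟨hz1, hz2⟩ := Finset.mem_filter.mp hz
          exact Finset.mem_filter.mpr ⟨Finset.erase_subset _ _ hz1, hz2⟩
        · have := CC_interval (p := p) (γ := γ) (wbar := wbar) (S := A) (T := S') hp
            (hγpos (e i)).le hgt.le ?_
          · linarith
          · intro t ha hb
            have hd := hdom t ha hb
            have hyf : y ∈ S.filter (fun z => t < γ z) :=
              Finset.mem_filter.mpr ⟨hyS, hb⟩
            have hNc : Nc γ S' t = Nc γ S t - 1 := by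
              rw [Nc, hS', Finset.filter_erase, Finset.card_erase_of_mem hyf]
              rfl
            have hNle : Nc γ S' t ≤ Nc γ S t := by
              apply Finset.card_le_card
              intro z hz
              obtain ⟨hz1, hz2⟩ := Finset.mem_filter.mp hz
              exact Finset.mem_filter.mpr ⟨Finset.erase_subset _ _ hz1, hz2⟩
            omega
      linarith
    · left
      push_neg at hbl
      have h2 : welfare p v γ (insert (e i) S)
          = welfare p v γ S + v (e i) - CC p γ wbar S (γ (e i)) :=
        welfare_insert hγpos hγinj hpz hS
      have h3 : welfare p v γ (insert (e i) S) ≤ welfare p v γ I := hopt _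
      have hK : CC p γ wbar S (γ (e i)) ≤ CC p γ wbar A (γ (e i)) := by
        have := CC_interval (p := p) (γ := γ) (wbar := wbar) (S := S) (T := A) hp
          le_rfl (hγpos (e i)).le (fun t ha hb => hbl t ha hb)
        rw [CC_zero, CC_zero] at this
        linarith
      linarith
  have hj0A : j0 ∉ A := fun h => hj0 (hAI h)
  have hfins : welfare p v γ (insert j0 A)
      = welfare p v γ A + v j0 - CC p γ wbar A (γ j0) :=
    welfare_insert hγpos hγinj hpz hj0A
  constructor
  · intro hneg S hS
    have hneg' : v j0 - CC p γ wbar A (γ j0) ≤ 0 := by rw [← theta_eq]; exact hneg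
    rcases main S hS with h | ⟨y, hyI, hle⟩
    · exact h
    · have hmy := hmax y hyI
      rw [theta_eq y, theta_eq j0] at hmy
      linarith
  · intro hposθ S hS
    have hposθ' : 0 < v j0 - CC p γ wbar A (γ j0) := by rw [← theta_eq]; exact hposθ
    rcases main S hS with h | ⟨y, hyI, hle⟩
    · rw [hfins]; linarith
    · have hmy := hmax y hyI
      rw [theta_eq y, theta_eq j0] at hmy
      rw [hfins]
      linarith
end
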